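/- Let α, β ∈ ℝ with α+iβ ∉ ℤ, and let μ ∈ ℂ. For x ∈ ℝ with x² < 3/4 define S₁(x) := (1/2+ix)^{−(α+iβ)/2}·(1/2−ix)^{−(α−iβ)/2}·₂F₁[1/2−α+μ, 1/2−α−μ; 1−α−iβ; 1/2+ix] and S₂(x) := (1/2+ix)^{(α+iβ)/2}·(1/2−ix)^{(α−iβ)/2}·₂F₁[1/2+α+μ, 1/2+α−μ; 1+α+iβ; 1/2+ix] (the hypergeometric series converge since |1/2+ix|² = 1/4+x² < 1). Then S₁ and S₂ are differentiable on (−√3/2, √3/2) and their Wronskian satisfies S₁(x)·S₂′(x) − S₂(x)·S₁′(x) = i(α+iβ)/(1/4+x²) for all x ∈ (−√3/2, √3/2). -/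

import Mathlib

open MeasureTheory Complex

/-- `(1/2 + i x) ^ λ := exp (λ · Log (1/2 + i x))`, principal branch. -/
noncomputable def zp (x : ℝ) (lam : ℂ) : ℂ :=
  Complex.exp (lam * Complex.log (1/2 + Complex.I * x))

/-- `(1/2 - i x) ^ λ := exp (λ · Log (1/2 - i x))`, principal branch. -/
noncomputable def zm (x : ℝ) (lam : ℂ) : ℂ :=
  Complex.exp (lam * Complex.log (1/2 - Complex.I * x))

/-- The Pochhammer symbol `(a)_k = a (a+1) ⋯ (a+k-1)`. -/
noncomputable def poch (a : ℂ) (k : ℕ) : ℂ := ∏ i ∈ Finset.range k, (a + i)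

/-- The Gauss hypergeometric series `₂F₁[a,b;c;z]` (convergent for `|z| < 1`). -/
noncomputable def F21 (a b c z : ℂ) : ℂ :=
  ∑' k : ℕ, poch a k * poch b k / (poch c k * (Nat.factorial k)) * z^k

/-- The Kummer solution `S₁` of the hypergeometric operator `D` on `Re z = 1/2`. -/
noncomputable def S1 (α β : ℝ) (μ : ℂ) (x : ℝ) : ℂ :=
  zp x (-((α : ℂ) + Complex.I*β)/2) * zm x (-((α : ℂ) - Complex.I*β)/2) *
    F21 (1/2 - α + μ) (1/2 - α - μ) (1 - α - Complex.I*β) (1/2 + Complex.I*x)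

/-- The Kummer solution `S₂ = S₁(-α,-β)` of the hypergeometric operator `D`. -/
noncomputable def S2 (α β : ℝ) (μ : ℂ) (x : ℝ) : ℂ :=
  zp x (((α : ℂ) + Complex.I*β)/2) * zm x (((α : ℂ) - Complex.I*β)/2) *
    F21 (1/2 + α + μ) (1/2 + α - μ) (1 + α + Complex.I*β) (1/2 + Complex.I*x)

/-!
Both solutions have the shape `u(x) · F(ζ)` with `ζ = 1/2 + ix`, `ξ = 1 - ζ = 1/2 - ix`, where the
prefactors of `S₁` and `S₂` are mutually inverse with logarithmic derivatives
`∓ i (γ/(2ζ) - γ̄/(2ξ))`, `γ = α + iβ`. Hence the Wronskian equals `i G(ζ) / (ζ ξ)` with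
`G(z) = z (1 - z) (F₁ F₂' - F₂ F₁') + (γ - 2α z) F₁ F₂`. Subtracting the hypergeometric equations
of `F₁` and `F₂` shows `G' = 0` on the unit disc (Abel's identity), so `G ≡ G(0) = γ`, and
`ζ ξ = 1/4 + x²`.
-/

open Filter Topology

def OneLeRadius (c : ℕ → ℂ) : Prop :=
  ∀ r : ℝ, 0 < r → r < 1 → Summable fun k => ‖c k‖ * r ^ k

noncomputable def powSeries (c : ℕ → ℂ) (z : ℂ) : ℂ := ∑' k, c k * z ^ k

def derivCoeff (c : ℕ → ℂ) (k : ℕ) : ℂ := (k + 1) * c (k + 1)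

namespace OneLeRadius

variable {c : ℕ → ℂ}

lemma congr (h : OneLeRadius c) {c' : ℕ → ℂ} (e : ∀ k, c' k = c k) : OneLeRadius c' :=
  (funext e).symm ▸ h

lemma summable (h : OneLeRadius c) {z : ℂ} (hz : ‖z‖ < 1) : Summable fun k => c k * z ^ k := by
  obtain ⟨r, hzr, hr1⟩ := exists_between hz
  refine .of_norm_bounded (h r ((norm_nonneg z).trans_lt hzr) hr1) fun k => ?_
  rw [norm_mul, norm_pow]
  gcongr

lemma shift (h : OneLeRadius c) (j : ℕ) : OneLeRadius fun k => c (k + j) := by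
  intro r hr0 hr1
  refine ((summable_nat_add_iff j).2 (h r hr0 hr1)).mul_left (r ^ j)⁻¹ |>.congr fun k => ?_
  rw [pow_add]
  field_simp

lemma natCast_add_mul (h : OneLeRadius c) (d : ℂ) : OneLeRadius fun k => (k + d) * c k := by
  intro r hr0 hr1
  obtain ⟨ρ, hrρ, hρ1⟩ := exists_between hr1
  have hρ0 : 0 < ρ := hr0.trans hrρ
  have hq0 : 0 ≤ r / ρ := by positivity
  have hq1 : r / ρ < 1 := (div_lt_one hρ0).2 hrρ
  -- the polynomial factor `k + d` is absorbed by the geometric gap between `r` and `ρ`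
  obtain ⟨C, hC⟩ : BddAbove (Set.range fun k : ℕ => ((k : ℝ) + ‖d‖) * (r / ρ) ^ k) := by
    refine Tendsto.bddAbove_range (a := 0) ?_
    simpa [add_mul] using (tendsto_self_mul_const_pow_of_lt_one hq0 hq1).add
      ((tendsto_pow_atTop_nhds_zero_of_lt_one hq0 hq1).const_mul ‖d‖)
  refine .of_nonneg_of_le (fun k => by positivity) (fun k => ?_) ((h ρ hρ0 hρ1).mul_left C)
  calc ‖((k : ℂ) + d) * c k‖ * r ^ k = ‖(k : ℂ) + d‖ * (r / ρ) ^ k * (‖c k‖ * ρ ^ k) := by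
        rw [norm_mul, div_pow]; field_simp
    _ ≤ ((k : ℝ) + ‖d‖) * (r / ρ) ^ k * (‖c k‖ * ρ ^ k) := by
        gcongr
        simpa using norm_add_le ((k : ℂ)) d
    _ ≤ C * (‖c k‖ * ρ ^ k) := by gcongr; exact hC ⟨k, rfl⟩

lemma derivCoeff (h : OneLeRadius c) : OneLeRadius (derivCoeff c) :=
  ((h.shift 1).natCast_add_mul 1).congr fun k => by simp [_root_.derivCoeff]

lemma of_ratio {q : ℕ → ℂ} (hrec : ∀ k, c (k + 1) = c k * q k) (hq : Tendsto q atTop (𝓝 1)) :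
    OneLeRadius c := by
  intro r hr0 hr1
  obtain ⟨s, hrs, hs1⟩ := exists_between hr1
  refine summable_of_ratio_norm_eventually_le hs1 ?_
  have hlim : Tendsto (fun k => ‖q k‖ * r) atTop (𝓝 r) := by
    simpa using hq.norm.mul_const r
  filter_upwards [hlim.eventually_le_const hrs] with k hk
  rw [Real.norm_of_nonneg (by positivity), Real.norm_of_nonneg (by positivity), hrec, norm_mul,
    pow_succ]
  calc ‖c k‖ * ‖q k‖ * (r ^ k * r) = ‖q k‖ * r * (‖c k‖ * r ^ k) := by ring
    _ ≤ s * (‖c k‖ * r ^ k) := by gcongr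

end OneLeRadius

lemma hasDerivAt_powSeries {c : ℕ → ℂ} (hc : OneLeRadius c) {z : ℂ} (hz : ‖z‖ < 1) :
    HasDerivAt (powSeries c) (powSeries (derivCoeff c) z) z := by
  obtain ⟨r, hzr, hr1⟩ := exists_between hz
  have hr0 : 0 < r := (norm_nonneg z).trans_lt hzr
  have hu : Summable fun k => ‖c k‖ * k * r ^ (k - 1) := by
    refine (summable_nat_add_iff 1).1 ((hc.derivCoeff r hr0 hr1).congr fun k => ?_)
    rw [derivCoeff, norm_mul, Nat.add_sub_cancel, Nat.cast_succ]
    norm_cast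
    ring
  have hD := hasDerivAt_tsum_of_isPreconnected hu Metric.isOpen_ball
    (convex_ball 0 r).isPreconnected (g := fun k w => c k * w ^ k)
    (fun k w _ => (hasDerivAt_pow k w).const_mul (c k)) (fun k w hw => ?_)
    (Metric.mem_ball_self hr0) ((hc.summable (by simp)) : Summable fun k => c k * 0 ^ k)
    (mem_ball_zero_iff.2 hzr)
  · refine hD.congr_deriv ?_
    rw [tsum_eq_zero_add']
    · simp only [powSeries, derivCoeff, Nat.cast_zero, zero_mul, mul_zero, zero_add,
        Nat.add_sub_cancel, Nat.cast_succ]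
      exact tsum_congr fun k => by ring
    · refine ((hc.derivCoeff).summable hz).congr fun k => ?_
      simp [derivCoeff]; ring
  · rw [mem_ball_zero_iff] at hw
    rw [norm_mul, norm_mul, norm_pow, Complex.norm_natCast, mul_assoc]
    gcongr

lemma powSeries_zero (c : ℕ → ℂ) : powSeries c 0 = c 0 := by
  rw [powSeries, tsum_eq_single 0 fun k hk => by rw [zero_pow hk, mul_zero], pow_zero, mul_one]

lemma powSeries_add {c c' : ℕ → ℂ} {z : ℂ} (hc : Summable fun k => c k * z ^ k)
    (hc' : Summable fun k => c' k * z ^ k) :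
    powSeries c z + powSeries c' z = powSeries (fun k => c k + c' k) z := by
  simp only [powSeries, add_mul]
  exact (hc.tsum_add hc').symm

lemma mul_powSeries (d : ℂ) (c : ℕ → ℂ) (z : ℂ) :
    d * powSeries c z = powSeries (fun k => d * c k) z := by
  simp only [powSeries, ← tsum_mul_left, mul_assoc]

lemma mul_powSeries_succ {c : ℕ → ℂ} {z : ℂ} (hc : Summable fun k => c k * z ^ k) :
    z * powSeries (fun k => c (k + 1)) z = powSeries c z - c 0 := by
  rw [powSeries, powSeries, hc.tsum_eq_zero_add, ← tsum_mul_left]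
  simp only [pow_zero, mul_one, add_sub_cancel_left, pow_succ]
  exact tsum_congr fun k => by ring

/-- `z d/dz + d` acting on a power series. -/
lemma mul_powSeries_derivCoeff_add {c : ℕ → ℂ} (hc : OneLeRadius c) {z : ℂ} (hz : ‖z‖ < 1)
    (d : ℂ) : z * powSeries (derivCoeff c) z + d * powSeries c z
      = powSeries (fun k => (k + d) * c k) z := by
  have hθ : z * powSeries (derivCoeff c) z = powSeries (fun k => k * c k) z := by
    convert mul_powSeries_succ ((hc.natCast_add_mul 0).summable hz) using 2 <;>
      simp [derivCoeff, powSeries]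
  have hθs : Summable fun k => k * c k * z ^ k := by
    simpa using (hc.natCast_add_mul 0).summable hz
  have hds : Summable fun k => d * c k * z ^ k := by
    simpa only [mul_assoc] using (hc.summable hz).mul_left d
  rw [hθ, mul_powSeries, powSeries_add hθs hds]
  simp only [add_mul]

noncomputable def hypergeomCoeff (a b c : ℂ) (k : ℕ) : ℂ :=
  poch a k * poch b k / (poch c k * k.factorial)

lemma F21_eq_powSeries (a b c : ℂ) : F21 a b c = powSeries (hypergeomCoeff a b c) := rfl

noncomputable def F21deriv (a b c : ℂ) : ℂ → ℂ := powSeries (derivCoeff (hypergeomCoeff a b c))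

noncomputable def F21deriv2 (a b c : ℂ) : ℂ → ℂ :=
  powSeries (derivCoeff (derivCoeff (hypergeomCoeff a b c)))

lemma poch_succ (a : ℂ) (k : ℕ) : poch a (k + 1) = poch a k * (a + k) :=
  Finset.prod_range_succ _ _

section

variable {a b c : ℂ}

lemma hypergeomCoeff_succ (hc : ∀ k : ℕ, c + k ≠ 0) (k : ℕ) :
    hypergeomCoeff a b c (k + 1)
      = hypergeomCoeff a b c k * ((a + k) / (c + k) * ((b + k) / (1 + k))) := by
  have hpoch : poch c k ≠ 0 := Finset.prod_ne_zero_iff.2 fun i _ => hc i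
  have hk : (1 + k : ℂ) ≠ 0 := by norm_cast; omega
  rw [hypergeomCoeff, hypergeomCoeff, poch_succ, poch_succ, poch_succ, Nat.factorial_succ]
  push_cast
  field_simp [hc k]
  ring

lemma oneLeRadius_hypergeomCoeff (hc : ∀ k : ℕ, c + k ≠ 0) :
    OneLeRadius (hypergeomCoeff a b c) := by
  refine .of_ratio (hypergeomCoeff_succ hc) ?_
  simpa using (tendsto_add_mul_div_add_mul_atTop_nhds a c 1 one_ne_zero).mul
    (tendsto_add_mul_div_add_mul_atTop_nhds b 1 1 one_ne_zero)

lemma hasDerivAt_F21 (hc : ∀ k : ℕ, c + k ≠ 0) {z : ℂ} (hz : ‖z‖ < 1) :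
    HasDerivAt (F21 a b c) (F21deriv a b c z) z :=
  hasDerivAt_powSeries (oneLeRadius_hypergeomCoeff hc) hz

lemma hasDerivAt_F21deriv (hc : ∀ k : ℕ, c + k ≠ 0) {z : ℂ} (hz : ‖z‖ < 1) :
    HasDerivAt (F21deriv a b c) (F21deriv2 a b c z) z :=
  hasDerivAt_powSeries (oneLeRadius_hypergeomCoeff hc).derivCoeff hz

/-- In coefficients, the hypergeometric equation is the recursion
`(k + 1) (k + c) h (k + 1) = (k + a) (k + b) h k`. -/
theorem F21_ode (hc : ∀ k : ℕ, c + k ≠ 0) {z : ℂ} (hz : ‖z‖ < 1) :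
    z * (1 - z) * F21deriv2 a b c z + (c - (a + b + 1) * z) * F21deriv a b c z
      - a * b * F21 a b c z = 0 := by
  set h := hypergeomCoeff a b c
  have hh : OneLeRadius h := oneLeRadius_hypergeomCoeff hc
  have e₁ := mul_powSeries_derivCoeff_add hh.derivCoeff hz c
  have e₂ := mul_powSeries_derivCoeff_add hh.derivCoeff hz (a + b + 1)
  have hs : Summable fun k => (k + (a + b)) * (k * h k) * z ^ k := by
    simpa using ((hh.natCast_add_mul 0).natCast_add_mul (a + b)).summable hz
  have hs' : Summable fun k => a * b * h k * z ^ k := by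
    simpa only [mul_assoc] using (hh.summable hz).mul_left (a * b)
  have e₃ : z * powSeries (fun k => (k + (a + b + 1)) * derivCoeff h k) z
      = powSeries (fun k => (k + (a + b)) * (k * h k)) z := by
    have := mul_powSeries_succ hs
    rw [Nat.cast_zero, zero_mul, mul_zero, sub_zero] at this
    rw [← this]
    congr 2
    ext k
    rw [derivCoeff]
    push_cast
    ring
  have e₄ := powSeries_add hs hs'
  have e₅ : powSeries (fun k => (k + c) * derivCoeff h k) z
      = powSeries (fun k => (k + (a + b)) * (k * h k) + a * b * h k) z := by
    congr 1
    ext k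
    have hk : (1 + k : ℂ) ≠ 0 := by norm_cast; omega
    rw [derivCoeff, show h (k + 1) = _ from hypergeomCoeff_succ hc k]
    field_simp [hc k]
    ring
  rw [F21deriv2, F21deriv, F21_eq_powSeries, mul_powSeries (a * b)]
  linear_combination e₁ - z * e₂ - e₃ - e₄ + e₅

end

theorem F21_wronskian {a₁ b₁ c₁ a₂ b₂ c₂ κ : ℂ} (hc₁ : ∀ k : ℕ, c₁ + k ≠ 0)
    (hc₂ : ∀ k : ℕ, c₂ + k ≠ 0) (hc : c₁ + c₂ = 2) (hs₁ : a₁ + b₁ = 1 - κ)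
    (hs₂ : a₂ + b₂ = 1 + κ) (hp : a₂ * b₂ - a₁ * b₁ = κ) {z : ℂ} (hz : ‖z‖ < 1) :
    z * (1 - z) * (F21 a₁ b₁ c₁ z * F21deriv a₂ b₂ c₂ z - F21 a₂ b₂ c₂ z * F21deriv a₁ b₁ c₁ z)
      + (c₂ - 1 - κ * z) * (F21 a₁ b₁ c₁ z * F21 a₂ b₂ c₂ z) = c₂ - 1 := by
  set G : ℂ → ℂ := fun w => w * (1 - w) *
      (F21 a₁ b₁ c₁ w * F21deriv a₂ b₂ c₂ w - F21 a₂ b₂ c₂ w * F21deriv a₁ b₁ c₁ w)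
    + (c₂ - 1 - κ * w) * (F21 a₁ b₁ c₁ w * F21 a₂ b₂ c₂ w)
  have hG' : ∀ w ∈ Metric.ball (0 : ℂ) 1, HasDerivAt G 0 w := by
    intro w hw
    rw [mem_ball_zero_iff] at hw
    have hA := hasDerivAt_F21 (b := b₁) (a := a₁) hc₁ hw
    have hB := hasDerivAt_F21 (b := b₂) (a := a₂) hc₂ hw
    have hA' := hasDerivAt_F21deriv (b := b₁) (a := a₁) hc₁ hw
    have hB' := hasDerivAt_F21deriv (b := b₂) (a := a₂) hc₂ hw
    have odeA := F21_ode (b := b₁) (a := a₁) hc₁ hw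
    have odeB := F21_ode (b := b₂) (a := a₂) hc₂ hw
    have hpoly : HasDerivAt (fun w : ℂ => w * (1 - w)) (1 - 2 * w) w :=
      ((hasDerivAt_id' w).fun_mul ((hasDerivAt_id' w).const_sub 1)).congr_deriv (by ring)
    have hlin : HasDerivAt (fun w : ℂ => c₂ - 1 - κ * w) (-κ) w := by
      simpa using ((hasDerivAt_id w).const_mul κ).const_sub (c₂ - 1)
    refine ((hpoly.fun_mul ((hA.fun_mul hB').fun_sub (hB.fun_mul hA'))).fun_add
      (hlin.fun_mul (hA.fun_mul hB))).congr_deriv ?_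
    linear_combination F21 a₁ b₁ c₁ w * odeB - F21 a₂ b₂ c₂ w * odeA
      + w * F21 a₁ b₁ c₁ w * F21deriv a₂ b₂ c₂ w * hs₂
      + F21deriv a₁ b₁ c₁ w * F21 a₂ b₂ c₂ w * (hc - w * hs₁)
      + F21 a₁ b₁ c₁ w * F21 a₂ b₂ c₂ w * hp
  have h0 : (0 : ℂ) ∈ Metric.ball 0 1 := Metric.mem_ball_self one_pos
  calc G z = G 0 := Metric.isOpen_ball.is_const_of_deriv_eq_zero
        (convex_ball 0 1).isPreconnected
        (fun w hw => (hG' w hw).differentiableAt.differentiableWithinAt)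
        (fun w hw => (hG' w hw).deriv) (mem_ball_zero_iff.2 hz) h0
    _ = c₂ - 1 := by simp [G, F21_eq_powSeries, powSeries_zero, hypergeomCoeff, poch]

lemma HasDerivAt.cexp_mul_log {g : ℝ → ℂ} {g' : ℂ} {x : ℝ} (hg : HasDerivAt g g' x)
    (hpos : 0 < (g x).re) (lam : ℂ) :
    HasDerivAt (fun y => Complex.exp (lam * Complex.log (g y)))
      (Complex.exp (lam * Complex.log (g x)) * (lam * g' / g x)) x := by
  have hf := ((hasDerivAt_log (Or.inl hpos)).const_mul lam).cexp
  refine (hf.comp x hg).congr_deriv ?_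
  ring

lemma hasDerivAt_half_add_I_mul (x : ℝ) : HasDerivAt (fun y : ℝ => 1 / 2 + I * y) I x := by
  simpa using ((hasDerivAt_id x).ofReal_comp.const_mul I).const_add (1 / 2 : ℂ)

lemma hasDerivAt_zp (x : ℝ) (lam : ℂ) :
    HasDerivAt (fun y => zp y lam) (zp x lam * (lam * I / (1 / 2 + I * x))) x :=
  HasDerivAt.cexp_mul_log (hasDerivAt_half_add_I_mul x) (by simp) lam

lemma hasDerivAt_zm (x : ℝ) (lam : ℂ) :
    HasDerivAt (fun y => zm y lam) (zm x lam * (lam * -I / (1 / 2 - I * x))) x := by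
  have hg : HasDerivAt (fun y : ℝ => 1 / 2 - I * y) (-I) x := by
    simpa using ((hasDerivAt_id x).ofReal_comp.const_mul I).const_sub (1 / 2 : ℂ)
  exact HasDerivAt.cexp_mul_log hg (by simp) lam

lemma zp_neg (x : ℝ) (lam : ℂ) : zp x (-lam) = (zp x lam)⁻¹ := by
  rw [zp, zp, neg_mul, exp_neg]

lemma zm_neg (x : ℝ) (lam : ℂ) : zm x (-lam) = (zm x lam)⁻¹ := by
  rw [zm, zm, neg_mul, exp_neg]

noncomputable def kummerSol (lam lam' a b c : ℂ) (x : ℝ) : ℂ :=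
  zp x lam * zm x lam' * F21 a b c (1 / 2 + I * x)

lemma hasDerivAt_kummerSol (lam lam' a b : ℂ) {c : ℂ} (hc : ∀ k : ℕ, c + k ≠ 0) {x : ℝ}
    (hx : ‖1 / 2 + I * x‖ < 1) :
    HasDerivAt (kummerSol lam lam' a b c)
      (zp x lam * zm x lam' * (I * ((lam / (1 / 2 + I * x) - lam' / (1 / 2 - I * x))
        * F21 a b c (1 / 2 + I * x) + F21deriv a b c (1 / 2 + I * x)))) x := by
  have hF := (hasDerivAt_F21 (a := a) (b := b) hc hx).comp x (hasDerivAt_half_add_I_mul x)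
  refine (((hasDerivAt_zp x lam).fun_mul (hasDerivAt_zm x lam')).fun_mul hF).congr_deriv ?_
  rw [Function.comp_apply]
  ring

lemma half_add_I_mul_ne_zero (x : ℝ) : (1 / 2 + I * x : ℂ) ≠ 0 := by simp [Complex.ext_iff]

lemma half_sub_I_mul_ne_zero (x : ℝ) : (1 / 2 - I * x : ℂ) ≠ 0 := by simp [Complex.ext_iff]

lemma kummerSol_wronskian {lam₁ lam₁' lam₂ lam₂' a₁ b₁ c₁ a₂ b₂ c₂ : ℂ} (hl : lam₁ + lam₂ = 0)
    (hl' : lam₁' + lam₂' = 0) (hc₁ : ∀ k : ℕ, c₁ + k ≠ 0) (hc₂ : ∀ k : ℕ, c₂ + k ≠ 0) {x : ℝ}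
    (hx : ‖1 / 2 + I * x‖ < 1) :
    kummerSol lam₁ lam₁' a₁ b₁ c₁ x * deriv (kummerSol lam₂ lam₂' a₂ b₂ c₂) x
        - kummerSol lam₂ lam₂' a₂ b₂ c₂ x * deriv (kummerSol lam₁ lam₁' a₁ b₁ c₁) x
      = I * ((1 / 2 + I * x) * (1 / 2 - I * x)
            * (F21 a₁ b₁ c₁ (1 / 2 + I * x) * F21deriv a₂ b₂ c₂ (1 / 2 + I * x)
              - F21 a₂ b₂ c₂ (1 / 2 + I * x) * F21deriv a₁ b₁ c₁ (1 / 2 + I * x))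
          + 2 * (lam₂ * (1 / 2 - I * x) - lam₂' * (1 / 2 + I * x))
            * (F21 a₁ b₁ c₁ (1 / 2 + I * x) * F21 a₂ b₂ c₂ (1 / 2 + I * x)))
        / ((1 / 2 + I * x) * (1 / 2 - I * x)) := by
  obtain rfl : lam₁ = -lam₂ := by linear_combination hl
  obtain rfl : lam₁' = -lam₂' := by linear_combination hl'
  rw [(hasDerivAt_kummerSol _ _ a₁ b₁ hc₁ hx).deriv, (hasDerivAt_kummerSol _ _ a₂ b₂ hc₂ hx).deriv,
    kummerSol, kummerSol]
  have hζ := half_add_I_mul_ne_zero x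
  have hξ := half_sub_I_mul_ne_zero x
  have hP : zp x lam₂ ≠ 0 := exp_ne_zero _
  have hM : zm x lam₂' ≠ 0 := exp_ne_zero _
  rw [zp_neg, zm_neg]
  generalize (1 / 2 + I * x : ℂ) = ζ at *
  generalize (1 / 2 - I * x : ℂ) = ξ at *
  field_simp
  ring

lemma norm_half_add_I_mul_lt_one {x : ℝ}
    (hx : x ∈ Set.Ioo (-(Real.sqrt 3 / 2)) (Real.sqrt 3 / 2)) : ‖1 / 2 + I * x‖ < 1 := by
  have hx2 : x ^ 2 < 3 / 4 := calc
    x ^ 2 < (Real.sqrt 3 / 2) ^ 2 := sq_lt_sq' hx.1 hx.2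
    _ = 3 / 4 := by rw [div_pow, Real.sq_sqrt (by norm_num)]; norm_num
  rw [← sq_lt_one_iff₀ (norm_nonneg _), Complex.sq_norm, Complex.normSq_apply]
  simp only [add_re, add_im, mul_re, mul_im, I_re, I_im, ofReal_re, ofReal_im]
  norm_num
  nlinarith

/-- Section 2.4: on `(-√3/2, √3/2)` the solutions `S₁`, `S₂` are differentiable and
their Wronskian equals `i(α+iβ)/(1/4+x²)`. -/
theorem stmt7 (α β : ℝ) (hne : ∀ m : ℤ, (α : ℂ) + Complex.I * β ≠ m) (μ : ℂ) :
    ∀ x ∈ Set.Ioo (-(Real.sqrt 3/2)) (Real.sqrt 3/2),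
      DifferentiableAt ℝ (S1 α β μ) x ∧ DifferentiableAt ℝ (S2 α β μ) x ∧
      S1 α β μ x * deriv (S2 α β μ) x - S2 α β μ x * deriv (S1 α β μ) x
        = Complex.I * ((α : ℂ) + Complex.I*β) / (1/4 + (x : ℂ)^2) := by
  intro x hx
  have hz := norm_half_add_I_mul_lt_one hx
  have hc₁ : ∀ k : ℕ, 1 - α - I * β + k ≠ 0 := fun k h =>
    hne (k + 1) (by push_cast; linear_combination -h)
  have hc₂ : ∀ k : ℕ, 1 + α + I * β + k ≠ 0 := fun k h =>
    hne (-(k + 1)) (by push_cast; linear_combination h)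
  refine ⟨(hasDerivAt_kummerSol _ _ _ _ hc₁ hz).differentiableAt,
    (hasDerivAt_kummerSol _ _ _ _ hc₂ hz).differentiableAt, ?_⟩
  have hW := F21_wronskian (a₁ := 1 / 2 - α + μ) (b₁ := 1 / 2 - α - μ) (a₂ := 1 / 2 + α + μ)
    (b₂ := 1 / 2 + α - μ) (κ := 2 * α) hc₁ hc₂ (by ring) (by ring) (by ring) (by ring) hz
  have hprod : (1 / 4 + (x : ℂ) ^ 2) = (1 / 2 + I * x) * (1 / 2 - I * x) := by
    linear_combination (x : ℂ) ^ 2 * I_sq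
  refine (kummerSol_wronskian ?_ ?_ hc₁ hc₂ hz).trans ?_
  · ring
  · ring
  rw [hprod]
  congr 1
  linear_combination I * hW
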